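/- arXiv:2209.13199 — 3 statements merged into one kernel-verified Lean document; each statement's English description precedes it below -/
import Mathlib

section
/- Let K be a field, R = K[s,t], and n ≥ 3. Define ψ : R^{n-1} → R by ψ(v) = Σ_{i=1}^{n-1} s^{n-1-i} t^{i-1} v_i, and K : R^{n-2} → R^{n-1} by sending the standard basis vector e_i to t·e_i − s·e_{i+1}. Then the sequence 0 → R^{n-2} →K R^{n-1} →ψ R is exact: K is injective and the image of K equals the kernel of ψ. -/
/-!
Write `N = n - 1` and pad `w` to a sequence `u` with `u 0 = u N = 0`, so that
`(K w)_j = t u_{j+1} - s u_j`. Then `s^{N-1-j} t^j (K w)_j = F (j+1) - F j` with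
`F j = s^{N-j} t^j u_j`, so `ψ ∘ K = 0` telescopes, and `K w = 0` forces `u_{j+1} = 0`
inductively as `t` is a nonzerodivisor. Conversely, if `ψ v = 0`, the partial sums
`F j = Σ_{i<j} s^{N-1-i} t^i v_i` are divisible by `s^{N-j}` termwise and, being minus the
tail sums, by `t^j`; as `t` is prime and `t ∤ s` they are divisible by `s^{N-j} t^j`, and
the quotients give the preimage.
-/

open MvPolynomial

/-- The map `ψ : R^{n-1} → R`, `v ↦ Σ_{i=1}^{n-1} s^{n-1-i} t^{i-1} v_i`
(in 0-indexed form, entry `i` is `s^{n-2-i} t^i`), where `R = K[s,t]`. -/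
noncomputable def stmt1Psi (K : Type*) [Field K] (n : ℕ)
    (v : Fin (n - 1) → MvPolynomial (Fin 2) K) : MvPolynomial (Fin 2) K :=
  ∑ i : Fin (n - 1), (X 0) ^ (n - 2 - (i : ℕ)) * (X 1) ^ (i : ℕ) * v i

/-- The map `K : R^{n-2} → R^{n-1}` sending `e_i ↦ t·e_i − s·e_{i+1}`. -/
noncomputable def stmt1K (K : Type*) [Field K] (n : ℕ)
    (w : Fin (n - 2) → MvPolynomial (Fin 2) K) : Fin (n - 1) → MvPolynomial (Fin 2) K :=
  fun j =>
    (X 1) * (if h : (j : ℕ) < n - 2 then w ⟨j, h⟩ else 0)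
      - (X 0) * (if h : 1 ≤ (j : ℕ) then w ⟨(j : ℕ) - 1, by have := j.2; omega⟩ else 0)

open Finset

theorem Prime.pow_mul_pow_dvd_of_not_dvd {M : Type*} [CommMonoidWithZero M] [IsCancelMulZero M]
    {s t p : M} (ht : Prime t) (hts : ¬t ∣ s) {a b : ℕ} (hsp : s ^ a ∣ p)
    (htp : t ^ b ∣ p) :
    s ^ a * t ^ b ∣ p := by
  obtain ⟨q, rfl⟩ := hsp
  exact mul_dvd_mul_left _ (ht.pow_dvd_of_dvd_mul_left b (fun h => hts (ht.dvd_of_dvd_pow h)) htp)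

section Syzygies

variable {R : Type*} [CommRing R] {s t : R}

theorem pow_mul_pow_mul_sub_eq {N j : ℕ} (hj : j < N) (u : ℕ → R) :
    s ^ (N - 1 - j) * t ^ j * (t * u (j + 1) - s * u j) =
      s ^ (N - (j + 1)) * t ^ (j + 1) * u (j + 1) - s ^ (N - j) * t ^ j * u j := by
  rw [show N - (j + 1) = N - 1 - j by omega, show N - j = N - 1 - j + 1 by omega]
  ring

theorem sum_range_pow_mul_pow_mul_sub (N : ℕ) (u : ℕ → R) :
    ∑ j ∈ range N, s ^ (N - 1 - j) * t ^ j * (t * u (j + 1) - s * u j) =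
      t ^ N * u N - s ^ N * u 0 := by
  rw [sum_congr rfl fun j hj => pow_mul_pow_mul_sub_eq (mem_range.1 hj) u,
    sum_range_sub (fun j => s ^ (N - j) * t ^ j * u j)]
  simp

theorem eq_of_mul_succ_sub_mul_eq (ht : IsLeftRegular t) {N : ℕ} {u u' : ℕ → R}
    (h0 : u 0 = u' 0) (h : ∀ j < N, t * u (j + 1) - s * u j = t * u' (j + 1) - s * u' j) :
    ∀ j ≤ N, u j = u' j := by
  intro j hj
  induction j with
  | zero => exact h0
  | succ j ih =>
    have hj' := h j hj
    rw [ih (by omega), sub_left_inj] at hj'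
    exact ht hj'

theorem exists_mul_succ_sub_mul_eq [IsDomain R] (hs : s ≠ 0) (ht : Prime t) (hts : ¬t ∣ s)
    {N : ℕ} {v : ℕ → R} (hv : ∑ j ∈ range N, s ^ (N - 1 - j) * t ^ j * v j = 0) :
    ∃ u : ℕ → R, u 0 = 0 ∧ u N = 0 ∧ ∀ j < N, t * u (j + 1) - s * u j = v j := by
  set F : ℕ → R := fun j => ∑ i ∈ range j, s ^ (N - 1 - i) * t ^ i * v i
  have hdvd : ∀ j ≤ N, s ^ (N - j) * t ^ j ∣ F j := by
    intro j hj
    refine ht.pow_mul_pow_dvd_of_not_dvd hts (dvd_sum fun i hi => ?_) ?_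
    · exact ((pow_dvd_pow s (by simp at hi; omega)).mul_right _).mul_right _
    · have htail : F j = -∑ i ∈ Ico j N, s ^ (N - 1 - i) * t ^ i * v i :=
        eq_neg_of_add_eq_zero_left ((sum_range_add_sum_Ico _ hj).trans hv)
      rw [htail, dvd_neg]
      exact dvd_sum fun i hi => ((pow_dvd_pow t (mem_Ico.1 hi).1).mul_left _).mul_right _
  choose! u hu using hdvd
  refine ⟨u, ?_, ?_, fun j hj => ?_⟩
  · simpa [F, hs] using (hu 0 (Nat.zero_le N)).symm
  · simpa [F, hv, ht.ne_zero] using (hu N le_rfl).symm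
  · have hst : s ^ (N - 1 - j) * t ^ j ≠ 0 :=
      mul_ne_zero (pow_ne_zero _ hs) (pow_ne_zero _ ht.ne_zero)
    refine mul_left_cancel₀ hst ?_
    rw [pow_mul_pow_mul_sub_eq hj, ← hu (j + 1) hj, ← hu j hj.le]
    exact sum_range_succ_sub_sum _

end Syzygies

/-- The shift by one makes `stmt1K` the uniform map `u ↦ (t * u (j + 1) - s * u j)_j`. -/
def padShift {R : Type*} [Zero R] {k : ℕ} (w : Fin k → R) : ℕ → R
  | 0 => 0
  | j + 1 => if h : j < k then w ⟨j, h⟩ else 0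

section PadShift

variable {R : Type*} [Zero R] {k : ℕ}

theorem padShift_eq_zero (w : Fin k → R) {j : ℕ} (hj : j = 0 ∨ k < j) : padShift w j = 0 := by
  rcases j with _ | j
  · rfl
  · simp [padShift, show ¬j < k by omega]

theorem padShift_comp_succ {u : ℕ → R} (h0 : u 0 = 0) {N j : ℕ} (hN : u N = 0)
    (hNk : N ≤ k + 1) (hj : j ≤ N) : padShift (fun i : Fin k => u (i + 1)) j = u j := by
  rcases j with _ | j
  · exact h0.symm
  · by_cases hjk : j < k
    · simp [padShift, hjk]
    · simp [padShift, hjk, show j + 1 = N by omega, hN]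

end PadShift

section Bridge

variable {K : Type*} [Field K]

theorem stmt1K_apply (n : ℕ) (w : Fin (n - 2) → MvPolynomial (Fin 2) K) (j : Fin (n - 1)) :
    stmt1K K n w j = X 1 * padShift w (j + 1) - X 0 * padShift w j := by
  obtain ⟨_ | i, hj⟩ := j
  · simp [stmt1K, padShift]
  · simp [stmt1K, padShift, show i < n - 2 by omega]

theorem stmt1Psi_eq_sum_range (n : ℕ) (v : Fin (n - 1) → MvPolynomial (Fin 2) K)
    (f : ℕ → MvPolynomial (Fin 2) K) (hf : ∀ j (hj : j < n - 1), f j = v ⟨j, hj⟩) :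
    stmt1Psi K n v = ∑ j ∈ range (n - 1), X 0 ^ (n - 1 - 1 - j) * X 1 ^ j * f j := by
  rw [stmt1Psi, ← Fin.sum_univ_eq_sum_range, Nat.sub_sub]
  exact sum_congr rfl fun j _ => by rw [hf j j.2]

end Bridge

theorem stmt_1_general (K : Type*) [Field K] (n : ℕ) :
    Function.Injective (stmt1K K n) ∧
      ∀ v : Fin (n - 1) → MvPolynomial (Fin 2) K,
        stmt1Psi K n v = 0 ↔ v ∈ Set.range (stmt1K K n) := by
  refine ⟨fun w w' h => funext fun i => ?_, fun v => ⟨fun hv => ?_, ?_⟩⟩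
  · have hpad := eq_of_mul_succ_sub_mul_eq (s := X 0) (N := n - 1) (u := padShift w)
      (u' := padShift w') (IsRegular.of_ne_zero (X_ne_zero 1)).left rfl fun j hj => by
        simpa only [stmt1K_apply] using congrFun h ⟨j, hj⟩
    simpa [padShift] using hpad (i + 1) (by omega)
  · obtain ⟨u, h0, hN, hu⟩ := exists_mul_succ_sub_mul_eq
      (s := (X 0 : MvPolynomial (Fin 2) K)) (t := X 1) (X_ne_zero 0) X_prime (by simp)
      (v := fun j => if h : j < n - 1 then v ⟨j, h⟩ else 0)
      (by rwa [← stmt1Psi_eq_sum_range n v _ fun j hj => dif_pos hj])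
    refine ⟨fun i => u (i + 1), funext fun j => ?_⟩
    rw [stmt1K_apply, padShift_comp_succ h0 hN (by omega) j.2,
      padShift_comp_succ h0 hN (by omega) j.2.le, hu j j.2, dif_pos j.2]
  · rintro ⟨w, rfl⟩
    rw [stmt1Psi_eq_sum_range n _ (fun j => X 1 * padShift w (j + 1) - X 0 * padShift w j)
        fun j hj => (stmt1K_apply n w ⟨j, hj⟩).symm,
      sum_range_pow_mul_pow_mul_sub, padShift_eq_zero w (by omega), padShift_eq_zero w (by omega)]
    simp

/-- `0 → R^{n-2} → R^{n-1} → R` is exact: `K` is injective and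
`im K = ker ψ`. -/
theorem stmt_1 (K : Type*) [Field K] (n : ℕ) (hn : 3 ≤ n) :
    Function.Injective (stmt1K K n) ∧
      ∀ v : Fin (n - 1) → MvPolynomial (Fin 2) K,
        stmt1Psi K n v = 0 ↔ v ∈ Set.range (stmt1K K n) :=
  stmt_1_general K n
end

section
/- Let K be an algebraically closed field, n ≥ 3, and let F = Σ_{i=1}^{n-1} λ_i Q_{i,i+1} with λ_1 = λ_{n-1} = 1 and λ_i ∈ {0,1}, where Q_{i,j} = x_i x_{j-1} − x_{i-1} x_j. Then the quadric hypersurface V(F) ⊂ ℙ^n is smooth at every point of the rational normal curve C = {(s^n : s^{n-1}t : ⋯ : t^n)}: for every (s,t) ≠ (0,0), the gradient of F at the point (s^n, s^{n-1}t, …, t^n) is nonzero. -/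
/-!
Along the rational normal curve only three partial derivatives are needed. By the three-term
formula `∂F/∂x_k = 2λ_k x_k - λ_{k+1} x_{k+2} - λ_{k-1} x_{k-2}` (with `λ_j = 0` outside
`[1, n - 1]`), at `(s^n : s^{n-1}t : ⋯ : t^n)`
one has `∂F/∂x_0 = -λ_1 s^{n-2} t^2`, which settles `st ≠ 0`; at `t = 0` one uses
`∂F/∂x_2 = -λ_1 s^n`, and at `s = 0` symmetrically `∂F/∂x_{n-2} = -λ_{n-1} t^n`.
-/

open MvPolynomial

open Fin.NatCast in
/-- The quadric `F = Σ_{i=1}^{n-1} λ_i Q_{i,i+1}` with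
`Q_{i,i+1} = x_i x_i − x_{i-1} x_{i+1}`. -/
noncomputable def stmt13F (K : Type*) [Field K] (n : ℕ) (l : ℕ → K) :
    MvPolynomial (Fin (n + 1)) K :=
  ∑ i ∈ Finset.Icc 1 (n - 1),
    C (l i) * (X (i : Fin (n + 1)) * X (i : Fin (n + 1))
      - X ((i - 1 : ℕ) : Fin (n + 1)) * X ((i + 1 : ℕ) : Fin (n + 1)))

theorem MvPolynomial.eval_pderiv_X_mul_X {σ R : Type*} [CommSemiring R] [DecidableEq σ]
    (P : σ → R) (k a b : σ) :
    eval P (pderiv k (X a * X b)) = (if k = a then P b else 0) + (if k = b then P a else 0) := by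
  rw [Derivation.leibniz, pderiv_X, pderiv_X]
  simp only [Pi.single_apply, smul_eq_mul, map_add, eval_X, apply_ite (eval P),
    map_zero, mul_ite, mul_one, mul_zero, eq_comm (b := k)]
  exact add_comm _ _

open Fin.NatCast in
theorem Fin.eq_natCast_iff_of_lt {n i : ℕ} [NeZero n] (k : Fin n) (hi : i < n) :
    k = (i : Fin n) ↔ (k : ℕ) = i := by
  rw [Fin.ext_iff, Fin.val_cast_of_lt hi]

/- For `k < 2` the truncated `k - 1` is `0 ∉ [1, n - 1]`, so the last term vanishes as it
should. -/
open Fin.NatCast in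
theorem eval_pderiv_stmt13F {K : Type*} [Field K] {n : ℕ} (l p : ℕ → K) (k : Fin (n + 1)) :
    eval (fun m : Fin (n + 1) => p m) (pderiv k (stmt13F K n l)) =
      2 * (Set.Icc 1 (n - 1)).indicator l k * p k
        - (Set.Icc 1 (n - 1)).indicator l (k + 1) * p (k + 2)
        - (Set.Icc 1 (n - 1)).indicator l (k - 1) * p (k - 2) := by
  have hval : ∀ i ≤ n, ((i : Fin (n + 1)) : ℕ) = i := fun i hi => Fin.val_cast_of_lt (by omega)
  have hterm : ∀ i ∈ Finset.Icc 1 (n - 1),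
      eval (fun m : Fin (n + 1) => p m)
          (pderiv k (C (l i) * (X (i : Fin (n + 1)) * X (i : Fin (n + 1))
            - X ((i - 1 : ℕ) : Fin (n + 1)) * X ((i + 1 : ℕ) : Fin (n + 1))))) =
        (if (k : ℕ) = i then 2 * l i * p i else 0)
          - (if (k : ℕ) + 1 = i then l i * p (i + 1) else 0)
          - (if (k : ℕ) = i + 1 then l i * p (i - 1) else 0) := by
    intro i hi
    rw [Finset.mem_Icc] at hi
    rw [pderiv_C_mul, map_mul, map_sub, map_sub, eval_C, eval_pderiv_X_mul_X,
      eval_pderiv_X_mul_X]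
    simp only [Fin.eq_natCast_iff_of_lt k (show i < n + 1 by omega),
      Fin.eq_natCast_iff_of_lt k (show i - 1 < n + 1 by omega),
      Fin.eq_natCast_iff_of_lt k (show i + 1 < n + 1 by omega),
      hval i (by omega), hval (i - 1) (by omega), hval (i + 1) (by omega)]
    split_ifs <;> first | omega | ring
  rw [stmt13F, map_sum, map_sum, Finset.sum_congr rfl hterm, Finset.sum_sub_distrib,
    Finset.sum_sub_distrib, Finset.sum_ite_eq, Finset.sum_ite_eq]
  generalize (k : ℕ) = j
  cases j with
  | zero => simp [Set.indicator_apply]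
  | succ j =>
    simp only [Nat.add_right_cancel_iff, Nat.add_sub_cancel, Nat.reduceSubDiff,
      Finset.sum_ite_eq, Set.indicator_apply, Set.mem_Icc, Finset.mem_Icc]
    split_ifs <;> ring

theorem stmt_13_general (K : Type*) [Field K] (n : ℕ) (hn : 3 ≤ n)
    (l : ℕ → K) (h1 : l 1 = 1) (hlast : l (n - 1) = 1)
    (s t : K) (hst : ¬(s = 0 ∧ t = 0)) :
    ∃ k : Fin (n + 1),
      eval (fun m : Fin (n + 1) => s ^ (n - (m : ℕ)) * t ^ (m : ℕ))
        (pderiv k (stmt13F K n l)) ≠ 0 := by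
  have hw0 : (Set.Icc 1 (n - 1)).indicator l 0 = 0 := Set.indicator_of_notMem (by simp) l
  have hw1 : (Set.Icc 1 (n - 1)).indicator l 1 = 1 :=
    (Set.indicator_of_mem (by simp; omega) l).trans h1
  have hwlast : (Set.Icc 1 (n - 1)).indicator l (n - 1) = 1 :=
    (Set.indicator_of_mem (by simp; omega) l).trans hlast
  by_cases ht : t = 0
  · have hs : s ≠ 0 := fun hs => hst ⟨hs, ht⟩
    refine ⟨⟨2, by omega⟩, ?_⟩
    rw [eval_pderiv_stmt13F l fun m => s ^ (n - m) * t ^ m]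
    dsimp only
    rw [ht, hw1]
    simp [hs]
  by_cases hs : s = 0
  · refine ⟨⟨n - 2, by omega⟩, ?_⟩
    rw [eval_pderiv_stmt13F l fun m => s ^ (n - m) * t ^ m]
    dsimp only
    rw [show n - 2 + 1 = n - 1 by omega, show n - 2 + 2 = n by omega, hwlast, hs]
    simp [ht, show n - (n - 2) ≠ 0 by omega, show n - (n - 2 - 2) ≠ 0 by omega]
  · refine ⟨⟨0, by omega⟩, ?_⟩
    rw [eval_pderiv_stmt13F l fun m => s ^ (n - m) * t ^ m]
    dsimp only
    rw [hw0, zero_add, hw1]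
    simp [hs, ht]

/-- with `λ_1 = λ_{n-1} = 1` and `λ_i ∈ {0,1}`, the quadric `V(F)`
is smooth at every point of the rational normal curve `(s^n : s^{n-1}t : ⋯ : t^n)`. -/
theorem stmt_13 (K : Type*) [Field K] [IsAlgClosed K] (n : ℕ) (hn : 3 ≤ n)
    (l : ℕ → K) (h1 : l 1 = 1) (hlast : l (n - 1) = 1) (h01 : ∀ i, l i = 0 ∨ l i = 1)
    (s t : K) (hst : ¬(s = 0 ∧ t = 0)) :
    ∃ k : Fin (n + 1),
      eval (fun m : Fin (n + 1) => s ^ (n - (m : ℕ)) * t ^ (m : ℕ))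
        (pderiv k (stmt13F K n l)) ≠ 0 :=
  stmt_13_general K n hn l h1 hlast s t hst
end

section
/- Let K be an infinite field, Q a symmetric p×p matrix and A a p×q matrix over K. Then there exists an invertible symmetric q×q matrix L such that rank(Q − A L^{-1} Aᵀ) ≥ rank(Q). Consequently, the symmetric block matrix M = [[Q, A],[Aᵀ, L]] satisfies rank(M) ≥ rank(Q) + q, i.e., corank(M) ≤ corank(Q). -/
/-!
Take `L = t⁻¹ • 1`, so that the Schur complement is `Q - t • B` with `B = A Aᵀ`. Bringing `Q` to
the normal form `V Q U = diag(1_r, 0)`, the leading `r × r` block of `V (Q - t • B) U` is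
`1 - t • B'`, whose determinant is the reverse characteristic polynomial of `B'`. That polynomial
equals `1` at `0`, so over an infinite field it is nonzero at some `t ≠ 0`, and then
`rank (Q - t • B) ≥ r`. The rank of the block matrix follows from the Schur complement
factorisation.
-/

open Matrix

namespace Matrix

open Polynomial

variable {K : Type*} [Field K] {m n : Type*} [Fintype m] [DecidableEq m] [Fintype n] [DecidableEq n]

theorem eval_charpolyRev_eq_det {R : Type*} [CommRing R] (B : Matrix n n R) (t : R) :
    B.charpolyRev.eval t = (1 - t • B).det := by
  rw [charpolyRev, ← coe_evalRingHom, RingHom.map_det]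
  congr 1
  ext i j
  simp [one_apply, apply_ite]
  ring

theorem exists_ne_zero_det_one_sub_smul_ne_zero [Infinite K] (B : Matrix n n K) :
    ∃ t : K, t ≠ 0 ∧ (1 - t • B).det ≠ 0 := by
  classical
  have hB : B.charpolyRev ≠ 0 := fun h => by simpa [h] using B.eval_charpolyRev
  obtain ⟨t, ht⟩ := Infinite.exists_notMem_finset (insert 0 B.charpolyRev.roots.toFinset)
  rw [Finset.mem_insert, Multiset.mem_toFinset, mem_roots hB, not_or] at ht
  refine ⟨t, ht.1, ?_⟩
  rw [IsRoot, eval_charpolyRev_eq_det] at ht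
  exact ht.2

theorem exists_ne_zero_rank_le_rank_sub_smul [Infinite K] (Q B : Matrix m m K) :
    ∃ t : K, t ≠ 0 ∧ Q.rank ≤ (Q - t • B).rank := by
  obtain ⟨V, U, e, hV, hU, hQ⟩ := Q.exists_rank_normal_form
  let ι : Fin Q.rank → m := e.symm ∘ Sum.inl
  obtain ⟨t, ht0, ht⟩ := exists_ne_zero_det_one_sub_smul_ne_zero ((V * B * U).submatrix ι ι)
  refine ⟨t, ht0, ?_⟩
  have hblock : (V * (Q - t • B) * U).submatrix ι ι = 1 - t • (V * B * U).submatrix ι ι := by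
    rw [mul_sub, sub_mul, hQ, Matrix.mul_smul, Matrix.smul_mul]
    ext i j
    simp [ι, one_apply]
  calc Q.rank = (1 - t • (V * B * U).submatrix ι ι).rank := by
        rw [rank_of_det_ne_zero ht, Fintype.card_fin]
    _ ≤ (V * (Q - t • B) * U).rank := hblock ▸ rank_submatrix_le _ _ _
    _ = (Q - t • B).rank := by
        rw [rank_mul_eq_left_of_isUnit_det _ _ ((isUnit_iff_isUnit_det U).mp hU),
          rank_mul_eq_right_of_isUnit_det _ _ ((isUnit_iff_isUnit_det V).mp hV)]

theorem _root_.LinearMap.finrank_range_prodMap {V₁ V₂ W₁ W₂ : Type*}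
    [AddCommGroup V₁] [Module K V₁] [AddCommGroup V₂] [Module K V₂]
    [AddCommGroup W₁] [Module K W₁] [AddCommGroup W₂] [Module K W₂]
    [FiniteDimensional K W₁] [FiniteDimensional K W₂]
    (f : V₁ →ₗ[K] W₁) (g : V₂ →ₗ[K] W₂) :
    Module.finrank K (LinearMap.range (f.prodMap g)) =
      Module.finrank K (LinearMap.range f) + Module.finrank K (LinearMap.range g) := by
  have hinj :
      Function.Injective ((LinearMap.range f).subtype.prodMap (LinearMap.range g).subtype) :=
    Function.Injective.prodMap Subtype.val_injective Subtype.val_injective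
  rw [LinearMap.range_prodMap, ← Module.finrank_prod, ← LinearMap.finrank_range_of_inj hinj,
    LinearMap.range_prodMap, Submodule.range_subtype, Submodule.range_subtype]

theorem rank_fromBlocks_zero₁₂_zero₂₁ (A : Matrix m m K) (D : Matrix n n K) :
    (fromBlocks A 0 0 D).rank = A.rank + D.rank := by
  let b := (Pi.basisFun K m).prod (Pi.basisFun K n)
  have h : fromBlocks A 0 0 D = LinearMap.toMatrix b b (A.toLin'.prodMap D.toLin') := by
    rw [LinearMap.toMatrix_prodMap, LinearMap.toMatrix_eq_toMatrix',
      LinearMap.toMatrix_eq_toMatrix', LinearMap.toMatrix'_toLin', LinearMap.toMatrix'_toLin']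
  rw [rank_eq_finrank_range_toLin _ b b, h, Matrix.toLin_toMatrix,
    LinearMap.finrank_range_prodMap]
  rfl

theorem rank_fromBlocks_of_invertible₂₂ (A : Matrix m m K) (B : Matrix m n K) (C : Matrix n m K)
    (D : Matrix n n K) [Invertible D] :
    (fromBlocks A B C D).rank = (A - B * ⅟D * C).rank + Fintype.card n := by
  have hupper : IsUnit (fromBlocks 1 (B * ⅟D) 0 1 : Matrix (m ⊕ n) (m ⊕ n) K).det := by simp
  have hlower : IsUnit (fromBlocks 1 0 (⅟D * C) 1 : Matrix (m ⊕ n) (m ⊕ n) K).det := by simp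
  rw [fromBlocks_eq_of_invertible₂₂, Matrix.mul_assoc, rank_mul_eq_right_of_isUnit_det _ _ hupper,
    rank_mul_eq_left_of_isUnit_det _ _ hlower, rank_fromBlocks_zero₁₂_zero₂₁,
    rank_of_isUnit D (isUnit_of_invertible D)]

end Matrix

theorem stmt_17_general (K : Type*) [Field K] [Infinite K] (p q : ℕ)
    (Q : Matrix (Fin p) (Fin p) K) (A : Matrix (Fin p) (Fin q) K) :
    ∃ L : Matrix (Fin q) (Fin q) K, L.IsSymm ∧ IsUnit L.det ∧
      Q.rank ≤ (Q - A * L⁻¹ * Aᵀ).rank ∧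
      Q.rank + q ≤ (Matrix.fromBlocks Q A Aᵀ L).rank := by
  obtain ⟨t, ht0, ht⟩ := Q.exists_ne_zero_rank_le_rank_sub_smul (A * Aᵀ)
  let L : Matrix (Fin q) (Fin q) K := t⁻¹ • 1
  have hL : IsUnit L.det := by simp [L, ht0]
  have hLinv : L⁻¹ = t • 1 := inv_eq_left_inv (by simp [L, smul_smul, ht0])
  have hSchur : Q - A * L⁻¹ * Aᵀ = Q - t • (A * Aᵀ) := by
    rw [hLinv, Matrix.mul_smul, Matrix.mul_one, Matrix.smul_mul]
  have : Invertible L := L.invertibleOfIsUnitDet hL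
  refine ⟨L, by simp [L, IsSymm], hL, hSchur ▸ ht, ?_⟩
  rw [rank_fromBlocks_of_invertible₂₂, invOf_eq_nonsing_inv, hSchur, Fintype.card_fin]
  exact Nat.add_le_add_right ht q

/-- over an infinite field, for symmetric `Q` and any `A`, there is an
invertible symmetric `L` with `rank(Q − A L⁻¹ Aᵀ) ≥ rank Q`; consequently the block
matrix `[[Q, A], [Aᵀ, L]]` has rank at least `rank Q + q`, i.e. corank at most
`corank Q`. -/
theorem stmt_17 (K : Type*) [Field K] [Infinite K] (p q : ℕ)
    (Q : Matrix (Fin p) (Fin p) K) (A : Matrix (Fin p) (Fin q) K) (hQ : Q.IsSymm) :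
    ∃ L : Matrix (Fin q) (Fin q) K, L.IsSymm ∧ IsUnit L.det ∧
      Q.rank ≤ (Q - A * L⁻¹ * Aᵀ).rank ∧
      Q.rank + q ≤ (Matrix.fromBlocks Q A Aᵀ L).rank :=
  stmt_17_general K p q Q A
end
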